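/- For every k ∈ [1,N], the k-th column of the matrix product M_𝐢 · N_𝐢 equals the hook vector r_k. -/

import Mathlib

namespace Stmt7

/-- Row index (1-indexed) of the box labeled `p` in the `t × U` rectangle. -/
def ibox (U p : ℕ) : ℕ := (p - 1) / U + 1

/-- Column index (1-indexed) of the box labeled `p`. -/
def jbox (U p : ℕ) : ℕ := (p - 1) % U + 1

/-- The residue `res(i,j) = t - i + j`. -/
def res (t i j : ℕ) : ℕ := t + j - i

/-- The word `i_p = res(i^p, j^p)`. -/
def iword (t U p : ℕ) : ℕ := res t (ibox U p) (jbox U p)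

/-- `Λ_m = e_1 + ⋯ + e_m` of `ℤ^{n+1}`, with 1-indexed coordinates. -/
def Lam (m : ℕ) : ℕ → ℤ := fun x => if 1 ≤ x ∧ x ≤ m then 1 else 0

/-- The simple reflection `s_r` acting on vectors by exchanging coordinates `r`, `r+1`. -/
def sAct (r : ℕ) (v : ℕ → ℤ) : ℕ → ℤ := fun x =>
  if x = r then v (r + 1) else if x = r + 1 then v r else v x

def applySeq : List ℕ → (ℕ → ℤ) → ℕ → ℤ
  | [], v => v
  | r :: rs, v => sAct r (applySeq rs v)

/-- `s_{i_{p+1}} s_{i_{p+2}} ⋯ s_{i_k} Λ_{i_k}`. -/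
def Nfrak (t U p k : ℕ) : ℕ → ℤ :=
  applySeq ((List.range (k - p)).map fun a => iword t U (p + 1 + a)) (Lam (iword t U k))

/-- The matrix `M_𝐢`. -/
def Ment (t U p q : ℕ) : ℤ :=
  if p ≤ q then Nfrak t U p q (iword t U p) - Nfrak t U p q (iword t U p + 1) else 0

/-- `p⁺ = min {q ∈ (p, N] : i_q = i_p}`, and `N + 1` when no such `q` exists. -/
def pplus (t U Nn p : ℕ) : ℕ :=
  if h : ((Finset.Ioc p Nn).filter fun q => iword t U q = iword t U p).Nonempty then
    ((Finset.Ioc p Nn).filter fun q => iword t U q = iword t U p).min' h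
  else Nn + 1

/-- The matrix `N_𝐢`: `n_{q,k} = 1` if `k = q`, `-1` if `k = q⁺`, and `0` otherwise. -/
def Nent (t U Nn q k : ℕ) : ℤ :=
  if k = q then 1 else if k = pplus t U Nn q then -1 else 0

/-- The hook vector `r_k`: `p`-th entry is `1` iff `i^p ≤ i^k`, `j^p ≤ j^k` and
(`i^p = i^k` or `j^p = j^k`). -/
def rvec (U k p : ℕ) : ℤ :=
  if ibox U p ≤ ibox U k ∧ jbox U p ≤ jbox U k ∧
      (ibox U p = ibox U k ∨ jbox U p = jbox U k) then 1 else 0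

/-!
Labels are ordered lexicographically by their boxes. Reading the word from right to left, the vector `s_{i_{p+1}} ⋯ s_{i_q} Λ_{i_q}` stays
the indicator of at most three explicit intervals, which gives `m_{p,q} = 1` exactly when box `p`
lies weakly north-west of box `q`. Boxes of equal residue lie on one diagonal, so `p⁺` is the
south-east diagonal neighbour of `p` when it exists. Column `k` of `M_𝐢 N_𝐢` is therefore the
indicator of the rectangle north-west of box `k` minus that of the rectangle north-west of its
north-west diagonal neighbour, and this difference is the hook `r_k`.
-/

open Finset

section Boxes

variable {U : ℕ}

theorem ibox_mul_add {B c : ℕ} (hc : 1 ≤ c) (hcU : c ≤ U) : ibox U (B * U + c) = B + 1 := by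
  have hc' : B * U + c - 1 = (c - 1) + U * B := by rw [mul_comm]; omega
  rw [ibox, hc', Nat.add_mul_div_left _ _ (by omega), Nat.div_eq_of_lt (by omega), zero_add]

theorem jbox_mul_add {B c : ℕ} (hc : 1 ≤ c) (hcU : c ≤ U) : jbox U (B * U + c) = c := by
  have hc' : B * U + c - 1 = (c - 1) + U * B := by rw [mul_comm]; omega
  rw [jbox, hc', Nat.add_mul_mod_self_left, Nat.mod_eq_of_lt (by omega)]
  omega

theorem ibox_mul_add_jbox {p : ℕ} (hp : 1 ≤ p) : ibox U p * U + jbox U p = p + U := by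
  have := Nat.div_add_mod' (p - 1) U
  simp only [ibox, jbox, Nat.succ_mul]
  omega

theorem one_le_ibox (p : ℕ) : 1 ≤ ibox U p := Nat.le_add_left 1 _

theorem one_le_jbox (p : ℕ) : 1 ≤ jbox U p := Nat.le_add_left 1 _

theorem jbox_le (hU : 0 < U) (p : ℕ) : jbox U p ≤ U := Nat.mod_lt _ hU

theorem ibox_le_iff (hU : 0 < U) {p t : ℕ} (hp : 1 ≤ p) : ibox U p ≤ t ↔ p ≤ t * U := by
  rw [ibox, Nat.add_one_le_iff, Nat.div_lt_iff_lt_mul hU]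
  omega

theorem ibox_mono {p q : ℕ} (h : p ≤ q) : ibox U p ≤ ibox U q :=
  Nat.add_le_add_right (Nat.div_le_div_right (Nat.sub_le_sub_right h 1)) 1

theorem eq_of_ibox_eq_of_jbox_eq {p q : ℕ} (hp : 1 ≤ p) (hq : 1 ≤ q)
    (hi : ibox U p = ibox U q) (hj : jbox U p = jbox U q) : p = q := by
  have hp' := ibox_mul_add_jbox (U := U) hp
  have hq' := ibox_mul_add_jbox (U := U) hq
  rw [hi, hj] at hp'
  omega

theorem le_iff_ibox_lt_or (hU : 0 < U) {p q : ℕ} (hp : 1 ≤ p) (hq : 1 ≤ q) :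
    p ≤ q ↔ ibox U p < ibox U q ∨ ibox U p = ibox U q ∧ jbox U p ≤ jbox U q := by
  have hp' := ibox_mul_add_jbox (U := U) hp
  have hq' := ibox_mul_add_jbox (U := U) hq
  have := jbox_le hU p
  have := jbox_le hU q
  constructor
  · intro h
    rcases (ibox_mono (U := U) h).lt_or_eq with hi | hi
    · exact Or.inl hi
    · exact Or.inr ⟨hi, by rw [hi] at hp'; omega⟩
  · rintro (hi | ⟨hi, hj⟩)
    · have : ibox U p * U + U ≤ ibox U q * U := by
        rw [← Nat.succ_mul]; exact Nat.mul_le_mul_right U hi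
      omega
    · rw [hi] at hp'; omega

theorem ibox_jbox_succ (hU : 0 < U) {p : ℕ} (hp : 1 ≤ p) :
    jbox U p < U ∧ ibox U (p + 1) = ibox U p ∧ jbox U (p + 1) = jbox U p + 1 ∨
      jbox U p = U ∧ ibox U (p + 1) = ibox U p + 1 ∧ jbox U (p + 1) = 1 := by
  obtain ⟨B, hB⟩ : ∃ B, ibox U p = B + 1 := ⟨_, rfl⟩
  have hp' := ibox_mul_add_jbox (U := U) hp
  rw [hB, Nat.succ_mul] at hp'
  rcases (jbox_le hU p).lt_or_eq with hj | hj
  · have h : p + 1 = B * U + (jbox U p + 1) := by omega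
    exact Or.inl ⟨hj, by rw [h, ibox_mul_add (by omega) hj, hB],
      by rw [h, jbox_mul_add (by omega) hj]⟩
  · have h : p + 1 = (B + 1) * U + 1 := by rw [Nat.succ_mul]; omega
    exact Or.inr ⟨hj, by rw [h, ibox_mul_add le_rfl hU, hB], by rw [h, jbox_mul_add le_rfl hU]⟩

theorem ibox_jbox_add_succ {q : ℕ} (hq : 1 ≤ q) (hj : jbox U q < U) :
    ibox U (q + U + 1) = ibox U q + 1 ∧ jbox U (q + U + 1) = jbox U q + 1 := by
  obtain ⟨B, hB⟩ : ∃ B, ibox U q = B + 1 := ⟨_, rfl⟩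
  have hq' := ibox_mul_add_jbox (U := U) hq
  have h : q + U + 1 = (B + 1) * U + (jbox U q + 1) := by rw [hB] at hq'; omega
  rw [h, ibox_mul_add (by omega) hj, jbox_mul_add (by omega) hj, hB]
  exact ⟨rfl, rfl⟩

theorem ibox_jbox_sub_succ (hU : 0 < U) {k : ℕ} (hk : 1 ≤ k) (hi : 2 ≤ ibox U k)
    (hj : 2 ≤ jbox U k) :
    1 ≤ k - (U + 1) ∧ ibox U (k - (U + 1)) = ibox U k - 1 ∧
      jbox U (k - (U + 1)) = jbox U k - 1 := by
  obtain ⟨B, hB⟩ : ∃ B, ibox U k = B + 2 := ⟨ibox U k - 2, by omega⟩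
  have hk' := ibox_mul_add_jbox (U := U) hk
  have := jbox_le hU k
  have h : k - (U + 1) = B * U + (jbox U k - 1) := by
    rw [hB, show (B + 2) * U = B * U + U + U by ring] at hk'; omega
  rw [h, ibox_mul_add (by omega) (by omega), jbox_mul_add (by omega) (by omega), hB]
  exact ⟨by omega, rfl, rfl⟩

end Boxes

section Nfrak

variable {t U : ℕ}

theorem nfrak_self (p : ℕ) : Nfrak t U p p = Lam (iword t U p) := by
  simp [Nfrak, applySeq]

theorem nfrak_of_lt {p q : ℕ} (h : p < q) :
    Nfrak t U p q = sAct (iword t U (p + 1)) (Nfrak t U (p + 1) q) := by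
  obtain ⟨d, rfl⟩ := Nat.exists_eq_add_of_lt h
  simp only [Nfrak, show p + d + 1 - p = d + 1 by omega, show p + d + 1 - (p + 1) = d by omega,
    List.range_succ_eq_map, List.map_cons, List.map_map, applySeq]
  congr 3
  ext a
  simp only [Function.comp_apply]
  congr 1
  omega

/-- The closed form of `Nfrak t U p q` (see `nfrak_apply`), where `(b, c)` and `(d, e)` are the
boxes of `p` and `q`: the indicator of three intervals, some possibly empty. -/
def nfrakFormula (t b c d e x : ℕ) : ℤ :=
  if 1 ≤ x ∧ x + d ≤ t ∨ t + 1 ≤ x + b ∧ x + b ≤ t + min c e ∨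
      t + c + 2 ≤ x + b ∧ x + b ≤ t + e + 1 then 1 else 0

theorem nfrakFormula_sub {t b c d e : ℕ} (hc : 1 ≤ c) (hd : d ≤ t)
    (h : b < d ∨ b = d ∧ c ≤ e) :
    nfrakFormula t b c d e (t + c - b) - nfrakFormula t b c d e (t + c - b + 1) =
      if c ≤ e then 1 else 0 := by
  simp only [nfrakFormula]
  split_ifs <;> omega

theorem nfrak_apply (hU : 0 < U) {p q : ℕ} (hp : 1 ≤ p) (hpq : p ≤ q) (hq : ibox U q ≤ t)
    (x : ℕ) :
    Nfrak t U p q x = nfrakFormula t (ibox U p) (jbox U p) (ibox U q) (jbox U q) x := by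
  induction hpq using Nat.decreasingInduction generalizing x with
  | self =>
    rw [nfrak_self]
    simp only [Lam, nfrakFormula, iword, res]
    have := jbox_le hU q
    split_ifs <;> omega
  | of_succ p hpq ih =>
    have hlex : ibox U (p + 1) < ibox U q ∨
        ibox U (p + 1) = ibox U q ∧ jbox U (p + 1) ≤ jbox U q :=
      (le_iff_ibox_lt_or hU (by omega) (by omega)).1 hpq
    rw [nfrak_of_lt hpq]
    simp only [sAct, ih (by omega), iword, res]
    have := jbox_le hU q
    rcases ibox_jbox_succ hU hp with ⟨hj, hi', hj'⟩ | ⟨hj, hi', hj'⟩ <;>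
    · rw [hi', hj'] at hlex ⊢
      simp only [nfrakFormula]
      split_ifs <;> omega

theorem ment_eq_ite (hU : 0 < U) {p q : ℕ} (hp : 1 ≤ p) (hq : 1 ≤ q) (hqN : q ≤ t * U) :
    Ment t U p q = if ibox U p ≤ ibox U q ∧ jbox U p ≤ jbox U q then 1 else 0 := by
  have hlex := le_iff_ibox_lt_or (U := U) hU hp hq
  have hqt := (ibox_le_iff hU hq).2 hqN
  by_cases hpq : p ≤ q
  · rw [Ment, if_pos hpq, nfrak_apply hU hp hpq hqt, nfrak_apply hU hp hpq hqt]
    have := hlex.1 hpq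
    rw [iword, res, nfrakFormula_sub (one_le_jbox p) hqt this]
    split_ifs <;> omega
  · rw [Ment, if_neg hpq, if_neg]
    rw [hlex] at hpq
    omega

end Nfrak

section Pplus

variable {t U : ℕ}

theorem lt_pplus {N q : ℕ} (hq : q ≤ N) : q < pplus t U N q := by
  unfold pplus
  split_ifs with h
  · exact (mem_Ioc.1 (mem_filter.1 (min'_mem _ h)).1).1
  · omega

theorem sum_mul_nent_eq_sub (f : ℕ → ℤ) {N k : ℕ} (hk : k ∈ Icc 1 N) :
    ∑ q ∈ Icc 1 N, f q * Nent t U N q k =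
      f k - ∑ q ∈ (Icc 1 N).filter (fun q => pplus t U N q = k), f q := by
  have h : ∀ q ∈ Icc 1 N, f q * Nent t U N q k =
      (if k = q then f q else 0) - if pplus t U N q = k then f q else 0 := by
    intro q hq
    have := lt_pplus (t := t) (U := U) (mem_Icc.1 hq).2
    unfold Nent
    split_ifs <;> omega
  rw [sum_congr rfl h, sum_sub_distrib, sum_ite_eq, if_pos hk, sum_filter]

theorem ibox_lt_and_jbox_lt_of_iword_eq (hU : 0 < U) {q y : ℕ} (hq : 1 ≤ q) (hqy : q < y)
    (hyN : y ≤ t * U)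
    (h : iword t U y = iword t U q) : ibox U q < ibox U y ∧ jbox U q < jbox U y := by
  have hyt := (ibox_le_iff hU (by omega)).2 hyN
  have hlex := (le_iff_ibox_lt_or (U := U) hU hq (by omega)).1 hqy.le
  have hne : ¬(ibox U q = ibox U y ∧ jbox U q = jbox U y) := fun ⟨hi, hj⟩ =>
    hqy.ne (eq_of_ibox_eq_of_jbox_eq hq (by omega) hi hj)
  simp only [iword, res] at h
  omega

theorem pplus_eq_add_succ (hU : 0 < U) {q : ℕ} (hq : 1 ≤ q) (hi : ibox U q < t)
    (hj : jbox U q < U) : pplus t U (t * U) q = q + U + 1 := by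
  obtain ⟨hi', hj'⟩ := ibox_jbox_add_succ hq hj
  have hmem : q + U + 1 ∈ (Ioc q (t * U)).filter fun y => iword t U y = iword t U q := by
    rw [mem_filter, mem_Ioc, ← ibox_le_iff hU (by omega)]
    refine ⟨⟨by omega, by omega⟩, ?_⟩
    simp only [iword, res, hi', hj']
    omega
  rw [pplus, dif_pos ⟨_, hmem⟩]
  refine le_antisymm (min'_le _ _ hmem) (le_min' _ _ _ fun y hy => ?_)
  rw [mem_filter, mem_Ioc] at hy
  have := ibox_lt_and_jbox_lt_of_iword_eq hU hq hy.1.1 hy.1.2 hy.2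
  rw [le_iff_ibox_lt_or hU (by omega) (by omega), hi', hj']
  omega

theorem pplus_eq_of_boundary (hU : 0 < U) {q : ℕ} (hq : 1 ≤ q)
    (h : t ≤ ibox U q ∨ U ≤ jbox U q) : pplus t U (t * U) q = t * U + 1 := by
  rw [pplus, dif_neg]
  rintro ⟨y, hy⟩
  rw [mem_filter, mem_Ioc] at hy
  have := ibox_lt_and_jbox_lt_of_iword_eq hU hq hy.1.1 hy.1.2 hy.2
  have := (ibox_le_iff hU (by omega)).2 hy.1.2
  have := jbox_le hU y
  omega

theorem pplus_eq_iff (hU : 0 < U) {q k : ℕ} (hq : 1 ≤ q) (hqN : q ≤ t * U) (hk : 1 ≤ k)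
    (hkN : k ≤ t * U) :
    pplus t U (t * U) q = k ↔ ibox U k = ibox U q + 1 ∧ jbox U k = jbox U q + 1 := by
  have := (ibox_le_iff hU hq).2 hqN
  have := (ibox_le_iff hU hk).2 hkN
  have := jbox_le hU k
  by_cases h : ibox U q < t ∧ jbox U q < U
  · obtain ⟨hi', hj'⟩ := ibox_jbox_add_succ hq h.2
    rw [pplus_eq_add_succ hU hq h.1 h.2, ← hi', ← hj']
    exact ⟨fun h => h ▸ ⟨rfl, rfl⟩,
      fun ⟨hi, hj⟩ => eq_of_ibox_eq_of_jbox_eq (by omega) hk hi.symm hj.symm⟩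
  · rw [pplus_eq_of_boundary hU hq (by omega)]
    omega

theorem filter_pplus_eq (hU : 0 < U) {k : ℕ} (hk : 1 ≤ k) (hkN : k ≤ t * U) :
    (Icc 1 (t * U)).filter (fun q => pplus t U (t * U) q = k) =
      if 2 ≤ ibox U k ∧ 2 ≤ jbox U k then {k - (U + 1)} else ∅ := by
  ext q
  rw [mem_filter, mem_Icc]
  split_ifs with hk2
  · obtain ⟨hq₀, hi₀, hj₀⟩ := ibox_jbox_sub_succ hU hk hk2.1 hk2.2
    rw [mem_singleton]
    constructor
    · rintro ⟨⟨hq, hqN⟩, h⟩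
      rw [pplus_eq_iff hU hq hqN hk hkN] at h
      exact eq_of_ibox_eq_of_jbox_eq (U := U) hq hq₀ (by omega) (by omega)
    · rintro rfl
      exact ⟨⟨hq₀, by omega⟩,
        (pplus_eq_iff hU hq₀ (by omega) hk hkN).2 ⟨by omega, by omega⟩⟩
  · rw [iff_false_right (notMem_empty q)]
    rintro ⟨⟨hq, hqN⟩, h⟩
    rw [pplus_eq_iff hU hq hqN hk hkN] at h
    have := one_le_ibox (U := U) q
    have := one_le_jbox (U := U) q
    omega

theorem sum_ment_mul_nent_eq_rvec (hU : 0 < U) {k p : ℕ} (hk : 1 ≤ k) (hkN : k ≤ t * U)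
    (hp : 1 ≤ p) :
    ∑ q ∈ Icc 1 (t * U), Ment t U p q * Nent t U (t * U) q k = rvec U k p := by
  rw [sum_mul_nent_eq_sub _ (mem_Icc.2 ⟨hk, hkN⟩), filter_pplus_eq hU hk hkN,
    ment_eq_ite hU hp hk hkN, rvec]
  by_cases hk2 : 2 ≤ ibox U k ∧ 2 ≤ jbox U k
  · obtain ⟨hq₀, hi₀, hj₀⟩ := ibox_jbox_sub_succ hU hk hk2.1 hk2.2
    rw [if_pos hk2, sum_singleton, ment_eq_ite hU hp hq₀ (by omega), hi₀, hj₀]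
    split_ifs <;> omega
  · rw [if_neg hk2, sum_empty]
    have := one_le_ibox (U := U) k
    have := one_le_jbox (U := U) k
    have := one_le_ibox (U := U) p
    have := one_le_jbox (U := U) p
    split_ifs <;> omega

end Pplus

theorem stmt7_general (n t : ℕ) :
    ∀ k p, 1 ≤ k → k ≤ t * (n - t + 1) → 1 ≤ p → p ≤ t * (n - t + 1) →
      (∑ q ∈ Finset.Icc 1 (t * (n - t + 1)),
          Ment t (n - t + 1) p q * Nent t (n - t + 1) (t * (n - t + 1)) q k)
        = rvec (n - t + 1) k p :=
  fun _ _ hk hkN hp _ => sum_ment_mul_nent_eq_rvec (Nat.succ_pos _) hk hkN hp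

theorem stmt7 (n t : ℕ) (hn : 1 ≤ n) (ht1 : 1 ≤ t) (htn : t ≤ n) :
    ∀ k p, 1 ≤ k → k ≤ t * (n - t + 1) → 1 ≤ p → p ≤ t * (n - t + 1) →
      (∑ q ∈ Finset.Icc 1 (t * (n - t + 1)),
          Ment t (n - t + 1) p q * Nent t (n - t + 1) (t * (n - t + 1)) q k)
        = rvec (n - t + 1) k p :=
  stmt7_general n t

end Stmt7
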